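/- arXiv:2207.06926 — 2 statements merged into one kernel-verified Lean document; each statement's English description precedes it below -/
import Mathlib

section
/- Fix positive constants V₁, V₂, P, C_α, θ ∈ (0,1), TOL > 0, and positive cost weights so that the total work is W(M₁, M₂) = M₁·N·P² + M₁·M₂·N·P for fixed N, P > 0. The minimization of W over M₁, M₂ > 0 subject to the variance constraint C_α²(V₁/M₁ + V₂/(M₁M₂)) = (1−θ)² TOL² is attained at M₂ = √(V₂ P / V₁) and M₁ = (V₁ + √(V₁V₂/P)) · C_α² / ((1−θ)² TOL²). -/
/-!
Solving the constraint for `M₁` gives `M₁ = C_α²(V₁ + V₂/M₂)/K` with `K = (1 - θ)²TOL²`, and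
feasibility of any `M₁, M₂ > 0` forces `K > 0`. On the constraint set the work is therefore
`N P C_α²/K · g(M₂)` with `g(x) = (V₁ + V₂/x)(P + x)`. For `s = √(V₂P/V₁)` one has
`g(x) = g(s) + V₁(x - s)²/x`, so `s` is the unique minimiser of `g` on `x > 0`, and
`V₂/s = √(V₁V₂/P)` turns the value of `M₁` at `M₂ = s` into the stated formula.
-/

open Real

theorem mul_add_div_mul_eq (c V₁ V₂ M₁ M₂ : ℝ) :
    c * (V₁ / M₁ + V₂ / (M₁ * M₂)) = c * (V₁ + V₂ / M₂) / M₁ := by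
  rw [div_mul_eq_div_div_swap, ← add_div, mul_div_assoc]

theorem div_sqrt_div_eq_sqrt_div {V₁ V₂ P : ℝ} (hV₁ : 0 < V₁) (hV₂ : 0 < V₂) (hP : 0 < P) :
    V₂ / √(V₂ * P / V₁) = √(V₁ * V₂ / P) := by
  rw [div_eq_iff (by positivity), ← sqrt_mul (by positivity)]
  rw [show V₁ * V₂ / P * (V₂ * P / V₁) = V₂ ^ 2 by field_simp]
  exact (sqrt_sq hV₂.le).symm

section Reduced

variable {a b p s x : ℝ}

theorem add_div_mul_add_eq_add_sq_div (hs : s ≠ 0) (hx : x ≠ 0) (hsab : s ^ 2 * a = b * p) :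
    (a + b / x) * (p + x) = (a + b / s) * (p + s) + a * (x - s) ^ 2 / x := by
  field_simp
  linear_combination (x - s) * hsab

theorem add_div_mul_add_le (ha : 0 ≤ a) (hs : s ≠ 0) (hx : 0 < x) (hsab : s ^ 2 * a = b * p) :
    (a + b / s) * (p + s) ≤ (a + b / x) * (p + x) := by
  rw [add_div_mul_add_eq_add_sq_div hs hx.ne' hsab]
  exact le_add_of_nonneg_right (by positivity)

theorem eq_of_add_div_mul_add_eq (ha : a ≠ 0) (hs : s ≠ 0) (hx : x ≠ 0)
    (hsab : s ^ 2 * a = b * p) (h : (a + b / x) * (p + x) = (a + b / s) * (p + s)) : x = s := by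
  rw [add_div_mul_add_eq_add_sq_div hs hx hsab, add_eq_left] at h
  simpa [ha, hx, sub_eq_zero] using h

end Reduced

theorem dlmc_optimal_samples_general (V₁ V₂ P N Cα TOL θ : ℝ)
    (hV₁ : 0 < V₁) (hV₂ : 0 < V₂) (hP : 0 < P) (hN : 0 < N)
    (hCα : 0 < Cα) :
    let W : ℝ → ℝ → ℝ := fun M₁ M₂ => M₁ * N * P ^ 2 + M₁ * M₂ * N * P
    let M₂star : ℝ := Real.sqrt (V₂ * P / V₁)
    let M₁star : ℝ := (V₁ + Real.sqrt (V₁ * V₂ / P)) * Cα ^ 2 / ((1 - θ) ^ 2 * TOL ^ 2)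
    Cα ^ 2 * (V₁ / M₁star + V₂ / (M₁star * M₂star)) = (1 - θ) ^ 2 * TOL ^ 2 ∧
    (∀ M₁ M₂ : ℝ, 0 < M₁ → 0 < M₂ →
      Cα ^ 2 * (V₁ / M₁ + V₂ / (M₁ * M₂)) = (1 - θ) ^ 2 * TOL ^ 2 →
      W M₁star M₂star ≤ W M₁ M₂) ∧
    (∀ M₁ M₂ : ℝ, 0 < M₁ → 0 < M₂ →
      Cα ^ 2 * (V₁ / M₁ + V₂ / (M₁ * M₂)) = (1 - θ) ^ 2 * TOL ^ 2 →
      W M₁ M₂ = W M₁star M₂star → M₁ = M₁star ∧ M₂ = M₂star) := by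
  intro W s M₁star
  set K := (1 - θ) ^ 2 * TOL ^ 2
  have hs : 0 < s := sqrt_pos.2 (by positivity)
  have hs_sq : s ^ 2 * V₁ = V₂ * P := by
    rw [sq_sqrt (by positivity)]
    field_simp
  have hM₁star : M₁star = Cα ^ 2 * (V₁ + V₂ / s) / K := by
    rw [div_sqrt_div_eq_sqrt_div hV₁ hV₂ hP]
    ring
  have hW : ∀ M₂, W (Cα ^ 2 * (V₁ + V₂ / M₂) / K) M₂ =
      N * P * Cα ^ 2 / K * ((V₁ + V₂ / M₂) * (P + M₂)) := fun _ => by ring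
  have hfeasible : ∀ M₁ M₂, 0 < M₁ → 0 < M₂ → Cα ^ 2 * (V₁ / M₁ + V₂ / (M₁ * M₂)) = K →
      0 < K ∧ M₁ = Cα ^ 2 * (V₁ + V₂ / M₂) / K := by
    intro M₁ M₂ hM₁ hM₂ h
    rw [mul_add_div_mul_eq] at h
    exact ⟨h ▸ by positivity, by rw [← h, div_div_cancel₀ (by positivity)]⟩
  refine ⟨?_, ?_, ?_⟩
  · rw [mul_add_div_mul_eq, hM₁star, div_div_cancel₀ (by positivity)]
  · intro M₁ M₂ hM₁ hM₂ h
    obtain ⟨hK, rfl⟩ := hfeasible M₁ M₂ hM₁ hM₂ h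
    rw [hM₁star, hW, hW]
    gcongr ?_ * ?_
    exact add_div_mul_add_le hV₁.le hs.ne' hM₂ hs_sq
  · intro M₁ M₂ hM₁ hM₂ h hWeq
    obtain ⟨hK, rfl⟩ := hfeasible M₁ M₂ hM₁ hM₂ h
    rw [hM₁star, hW, hW] at hWeq
    have hM₂ : M₂ = s :=
      eq_of_add_div_mul_add_eq hV₁.ne' hs.ne' hM₂.ne' hs_sq
        (mul_left_cancel₀ (by positivity) hWeq)
    subst hM₂
    exact ⟨hM₁star.symm, rfl⟩

/-- The minimization of the DLMC work `W(M₁,M₂) = M₁NP² + M₁M₂NP` over `M₁, M₂ > 0`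
subject to the variance constraint `C_α²(V₁/M₁ + V₂/(M₁M₂)) = (1−θ)²TOL²` is attained
uniquely at `M₂ = √(V₂P/V₁)` and `M₁ = (V₁ + √(V₁V₂/P))·C_α²/((1−θ)²TOL²)`. -/
theorem dlmc_optimal_samples (V₁ V₂ P N Cα TOL θ : ℝ)
    (hV₁ : 0 < V₁) (hV₂ : 0 < V₂) (hP : 0 < P) (hN : 0 < N)
    (hCα : 0 < Cα) (hTOL : 0 < TOL) (hθ : 0 < θ) (hθ1 : θ < 1) :
    let W : ℝ → ℝ → ℝ := fun M₁ M₂ => M₁ * N * P ^ 2 + M₁ * M₂ * N * P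
    let M₂star : ℝ := Real.sqrt (V₂ * P / V₁)
    let M₁star : ℝ := (V₁ + Real.sqrt (V₁ * V₂ / P)) * Cα ^ 2 / ((1 - θ) ^ 2 * TOL ^ 2)
    Cα ^ 2 * (V₁ / M₁star + V₂ / (M₁star * M₂star)) = (1 - θ) ^ 2 * TOL ^ 2 ∧
    (∀ M₁ M₂ : ℝ, 0 < M₁ → 0 < M₂ →
      Cα ^ 2 * (V₁ / M₁ + V₂ / (M₁ * M₂)) = (1 - θ) ^ 2 * TOL ^ 2 →
      W M₁star M₂star ≤ W M₁ M₂) ∧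
    (∀ M₁ M₂ : ℝ, 0 < M₁ → 0 < M₂ →
      Cα ^ 2 * (V₁ / M₁ + V₂ / (M₁ * M₂)) = (1 - θ) ^ 2 * TOL ^ 2 →
      W M₁ M₂ = W M₁star M₂star → M₁ = M₁star ∧ M₂ = M₂star) :=
  dlmc_optimal_samples_general V₁ V₂ P N Cα TOL θ hV₁ hV₂ hP hN hCα
end

section
/- Suppose bias and statistical error constants satisfy: bias(P, N₁, N₂) ≤ C_p/P + C_{n₁}/N₁ + C_{n₂}/N₂ and variance(P, M₁, M₂) ≤ C₁/(PM₁) + C₂/(M₁M₂) with all constants positive. Then for every TOL > 0 and θ ∈ (0,1) there exist positive reals P, N₁, N₂, M₁, M₂ with C_p/P + C_{n₁}/N₁ + C_{n₂}/N₂ ≤ θ·TOL and C_α²(C₁/(PM₁) + C₂/(M₁M₂)) ≤ (1−θ)²·TOL², and such that the work M₁N₁P² + M₁M₂N₂P ≤ K·TOL⁻⁴ for a constant K depending only on C_p, C_{n₁}, C_{n₂}, C₁, C₂, C_α, θ. -/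
/-!
Every constraint is homogeneous in `TOL`: dividing all five parameters by `TOL` multiplies the
bias bound by `TOL`, the variance bound by `TOL²` and the work by `TOL⁻⁴`. So it suffices to
meet both constraints at `TOL = 1`, which `P = 3C_p/θ`, `N_i = 3C_{n_i}/θ` (a third of the bias
budget for each term), `M₂ = P` and `M₁ = C_α²(C₁ + C₂)/(P(1-θ)²)` do with equality; the
constant `K` is then the work at `TOL = 1`.
-/

noncomputable section

def biasBound (Cp Cn₁ Cn₂ P N₁ N₂ : ℝ) : ℝ := Cp / P + Cn₁ / N₁ + Cn₂ / N₂

def varianceBound (C₁ C₂ P M₁ M₂ : ℝ) : ℝ := C₁ / (P * M₁) + C₂ / (M₁ * M₂)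

def work (P N₁ N₂ M₁ M₂ : ℝ) : ℝ := M₁ * N₁ * P ^ 2 + M₁ * M₂ * N₂ * P

end

theorem biasBound_div (t Cp Cn₁ Cn₂ P N₁ N₂ : ℝ) :
    biasBound Cp Cn₁ Cn₂ (P / t) (N₁ / t) (N₂ / t) = biasBound Cp Cn₁ Cn₂ P N₁ N₂ * t := by
  simp only [biasBound, div_div_eq_mul_div, add_mul, mul_div_right_comm]

theorem varianceBound_div (t C₁ C₂ P M₁ M₂ : ℝ) :
    varianceBound C₁ C₂ (P / t) (M₁ / t) (M₂ / t) = varianceBound C₁ C₂ P M₁ M₂ * t ^ 2 := by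
  rcases eq_or_ne t 0 with rfl | ht
  · simp [varianceBound]
  · simp only [varianceBound]
    field_simp

theorem work_div (t P N₁ N₂ M₁ M₂ : ℝ) :
    work (P / t) (N₁ / t) (N₂ / t) (M₁ / t) (M₂ / t) = work P N₁ N₂ M₁ M₂ * t ^ (-4 : ℤ) := by
  rcases eq_or_ne t 0 with rfl | ht
  · simp [work]
  · simp only [work, zpow_neg, zpow_ofNat]
    field_simp

theorem exists_params_unit_tolerance {Cp Cn₁ Cn₂ C₁ C₂ Cα θ : ℝ}
    (hCp : 0 < Cp) (hCn₁ : 0 < Cn₁) (hCn₂ : 0 < Cn₂)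
    (hC₁ : 0 < C₁) (hC₂ : 0 < C₂) (hCα : 0 < Cα) (hθ : 0 < θ) (hθ1 : θ < 1) :
    ∃ P N₁ N₂ M₁ M₂ : ℝ, 0 < P ∧ 0 < N₁ ∧ 0 < N₂ ∧ 0 < M₁ ∧ 0 < M₂ ∧
      biasBound Cp Cn₁ Cn₂ P N₁ N₂ ≤ θ ∧
      Cα ^ 2 * varianceBound C₁ C₂ P M₁ M₂ ≤ (1 - θ) ^ 2 := by
  have h1θ : 0 < 1 - θ := sub_pos.mpr hθ1
  set P := 3 * Cp / θ
  have hP : 0 < P := by positivity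
  refine ⟨P, 3 * Cn₁ / θ, 3 * Cn₂ / θ, Cα ^ 2 * (C₁ + C₂) / (P * (1 - θ) ^ 2), P,
    hP, by positivity, by positivity, by positivity, hP, le_of_eq ?_, le_of_eq ?_⟩
  · simp only [biasBound, P]
    field_simp
    ring
  · simp only [varianceBound]
    field_simp

/-- Existence of parameter choices achieving bias and statistical constraints with total
work `O(TOL⁻⁴)`: there is a constant `K` depending only on the constants such that for
every `TOL > 0` one can pick `P, N₁, N₂, M₁, M₂ > 0` with
`C_p/P + C_{n₁}/N₁ + C_{n₂}/N₂ ≤ θTOL`,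
`C_α²(C₁/(PM₁) + C₂/(M₁M₂)) ≤ (1−θ)²TOL²`, and work ≤ `K·TOL⁻⁴`. -/
theorem dlmc_complexity_existence (Cp Cn₁ Cn₂ C₁ C₂ Cα θ : ℝ)
    (hCp : 0 < Cp) (hCn₁ : 0 < Cn₁) (hCn₂ : 0 < Cn₂)
    (hC₁ : 0 < C₁) (hC₂ : 0 < C₂) (hCα : 0 < Cα)
    (hθ : 0 < θ) (hθ1 : θ < 1) :
    ∃ K : ℝ, 0 < K ∧ ∀ TOL : ℝ, 0 < TOL →
      ∃ P N₁ N₂ M₁ M₂ : ℝ, 0 < P ∧ 0 < N₁ ∧ 0 < N₂ ∧ 0 < M₁ ∧ 0 < M₂ ∧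
        Cp / P + Cn₁ / N₁ + Cn₂ / N₂ ≤ θ * TOL ∧
        Cα ^ 2 * (C₁ / (P * M₁) + C₂ / (M₁ * M₂)) ≤ (1 - θ) ^ 2 * TOL ^ 2 ∧
        M₁ * N₁ * P ^ 2 + M₁ * M₂ * N₂ * P ≤ K * TOL ^ (-4 : ℤ) := by
  obtain ⟨P, N₁, N₂, M₁, M₂, hP, hN₁, hN₂, hM₁, hM₂, hbias, hvar⟩ :=
    exists_params_unit_tolerance hCp hCn₁ hCn₂ hC₁ hC₂ hCα hθ hθ1
  refine ⟨work P N₁ N₂ M₁ M₂, by unfold work; positivity, fun TOL hTOL => ?_⟩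
  refine ⟨P / TOL, N₁ / TOL, N₂ / TOL, M₁ / TOL, M₂ / TOL, by positivity, by positivity,
    by positivity, by positivity, by positivity, ?_, ?_, (work_div TOL P N₁ N₂ M₁ M₂).le⟩
  · calc biasBound Cp Cn₁ Cn₂ (P / TOL) (N₁ / TOL) (N₂ / TOL)
        _ = biasBound Cp Cn₁ Cn₂ P N₁ N₂ * TOL := biasBound_div TOL Cp Cn₁ Cn₂ P N₁ N₂
        _ ≤ θ * TOL := by gcongr
  · calc Cα ^ 2 * varianceBound C₁ C₂ (P / TOL) (M₁ / TOL) (M₂ / TOL)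
        _ = Cα ^ 2 * varianceBound C₁ C₂ P M₁ M₂ * TOL ^ 2 := by
          rw [varianceBound_div, mul_assoc]
        _ ≤ (1 - θ) ^ 2 * TOL ^ 2 := by gcongr
end
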